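/- Let H be a real inner product space, let a : H × H → ℝ be a bilinear map for which there exists c > 0 with a(v, v) ≥ c‖v‖² for all v ∈ H, and let B : H → H be monotone (⟨B(u) − B(v), u − v⟩ ≥ 0 for all u, v) and L-Lipschitz (‖B(u) − B(v)‖ ≤ L‖u − v‖ for all u, v), with L ≥ 0. Let S ⊆ H be a subspace, let U, Ũ ∈ S, w ∈ H, and let ℓ : H → ℝ be such that a(U, φ) + ⟨B(U), φ⟩ = ℓ(φ) and a(Ũ, φ) + ⟨B(w), φ⟩ = ℓ(φ) for all φ ∈ S. Then ‖U − Ũ‖ ≤ (L/c) ‖w − Ũ‖. -/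
import Mathlib


open RealInnerProductSpace

/-- Abstract form of Lemma 4.5: if `a` is a coercive bilinear form on a real inner
product space `H`, `B : H → H` is monotone and `L`-Lipschitz, `S ⊆ H` is a subspace,
and `U, Ut ∈ S` satisfy `a(U, φ) + ⟨B(U), φ⟩ = ℓ(φ)` and `a(Ut, φ) + ⟨B(w), φ⟩ = ℓ(φ)`
for all `φ ∈ S`, then `‖U - Ut‖ ≤ (L/c) ‖w - Ut‖`. -/
theorem discrete_intermediate_estimate
    {H : Type*} [NormedAddCommGroup H] [InnerProductSpace ℝ H]
    (a : H →ₗ[ℝ] H →ₗ[ℝ] ℝ) (c : ℝ) (hc : 0 < c)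
    (hcoer : ∀ v : H, c * ‖v‖ ^ 2 ≤ a v v)
    (B : H → H) (hBmono : ∀ u v : H, 0 ≤ ⟪B u - B v, u - v⟫)
    (L : ℝ) (hL : 0 ≤ L) (hBlip : ∀ u v : H, ‖B u - B v‖ ≤ L * ‖u - v‖)
    (S : Submodule ℝ H) (U Ut : H) (hU : U ∈ S) (hUt : Ut ∈ S) (w : H)
    (ℓ : H → ℝ)
    (h₁ : ∀ φ ∈ S, a U φ + ⟪B U, φ⟫ = ℓ φ)
    (h₂ : ∀ φ ∈ S, a Ut φ + ⟪B w, φ⟫ = ℓ φ) :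
    ‖U - Ut‖ ≤ L / c * ‖w - Ut‖ := by
  set e := U - Ut with he
  have heS : e ∈ S := S.sub_mem hU hUt
  have key : a U e + ⟪B U, e⟫ = a Ut e + ⟪B w, e⟫ := by
    rw [h₁ e heS, h₂ e heS]
  have hae : (a e e : ℝ) = ⟪B w - B U, e⟫ := by
    have h3 : a U e - a Ut e = ⟪B w, e⟫ - ⟪B U, e⟫ := by linarith
    have h4 : (a e e : ℝ) = a U e - a Ut e := by
      simp only [he, map_sub, LinearMap.sub_apply]; ring
    rw [h4, h3, inner_sub_left]
  have hmono : 0 ≤ ⟪B U - B Ut, e⟫ := hBmono U Ut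
  have hsplit : ⟪B w - B U, e⟫ = ⟪B w - B Ut, e⟫ - ⟪B U - B Ut, e⟫ := by
    rw [← inner_sub_left, sub_sub_sub_cancel_right]
  have hle : c * ‖e‖ ^ 2 ≤ ‖B w - B Ut‖ * ‖e‖ := by
    calc c * ‖e‖ ^ 2 ≤ a e e := hcoer e
      _ = ⟪B w - B U, e⟫ := hae
      _ ≤ ⟪B w - B Ut, e⟫ := by rw [hsplit]; linarith
      _ ≤ ‖B w - B Ut‖ * ‖e‖ := real_inner_le_norm _ _
  have hlip := hBlip w Ut
  rcases eq_or_ne e 0 with h0 | h0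
  · rw [h0, norm_zero]
    positivity
  · have hne : 0 < ‖e‖ := norm_pos_iff.mpr h0
    have : c * ‖e‖ ≤ L * ‖w - Ut‖ := by
      have := mul_le_mul_of_nonneg_right hlip (le_of_lt hne)
      nlinarith [sq_nonneg (‖e‖)]
    rw [div_mul_eq_mul_div, le_div_iff₀ hc]
    linarith
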